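/- arXiv:2408.02515 — 5 statements merged into one kernel-verified Lean document; each statement's English description precedes it below -/
import Mathlib

section
/- Let ω : ℝ³ → ℝ be measurable with ω(k) > 0 for almost every k, let g ∈ L²(ℝ³, ℂ), λ, ω₀ ∈ ℝ, and for f ∈ L²(ℝ³, ℂ) and t ∈ ℝ set g_t(k) = (1 − e^{iω(k)t}) g(k)/(i ω(k)), φ_f(t) = (ω₀/2)t − (λ/√2)·Re ∫ conj(f(k)) g_t(k) dk, and U_t(f) = diag(e^{−iφ_f(t)}, e^{iφ_f(t)}). Let μ be a Borel probability measure on L²(ℝ³, ℂ), let γ₀ be a 2×2 complex matrix, and define γ(t) = ∫ U_t(f) γ₀ U_t(f)* dμ(f) (the entrywise Bochner integral, which exists since the integrand has entries bounded by ‖γ₀‖ and depends continuously on f). Then for all t ∈ ℝ: the diagonal entries satisfy (γ(t))₁₁ = (γ₀)₁₁ and (γ(t))₂₂ = (γ₀)₂₂, and the off-diagonal entry satisfies (γ(t))₁₂ = e^{−iω₀ t} · (∫ exp(i√2·λ·Re ∫_{ℝ³} conj(f(k)) g_t(k) dk) dμ(f)) · (γ₀)₁₂. -/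
/-! The phase matrix `U_t(f)` is diagonal and unitary, so conjugating `γ₀` by it leaves the
diagonal entries unchanged and multiplies the coherence by `e^{-2iφ_f(t)}`. Since
`2φ_f(t) = ω₀ t - √2 λ Re⟨f, g_t⟩`, this factor splits into the deterministic `e^{-iω₀t}` and
the random `e^{i√2 λ Re⟨f, g_t⟩}`, and averaging over the probability measure `μ` gives the
decoherence function. -/

open MeasureTheory Complex Matrix

noncomputable instance :
    MeasurableSpace (Lp ℂ 2 (volume : Measure (EuclideanSpace ℝ (Fin 3)))) := borel _

theorem Matrix.diag_two_mul_mul_conjTranspose {R : Type*} [CommRing R] [StarRing R]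
    (a b : R) (A : Matrix (Fin 2) (Fin 2) R) :
    !![a, 0; 0, b] * A * (!![a, 0; 0, b])ᴴ
      = !![a * A 0 0 * star a, a * A 0 1 * star b; b * A 1 0 * star a, b * A 1 1 * star b] := by
  ext i j
  fin_cases i <;> fin_cases j <;>
    simp [Matrix.mul_apply, Fin.sum_univ_two, Matrix.conjTranspose_apply, vecMul, dotProduct]

theorem Complex.star_exp_I_mul_ofReal (θ : ℝ) : star (exp (I * θ)) = exp (-I * θ) := by
  simp [← exp_conj]

theorem Complex.star_exp_neg_I_mul_ofReal (θ : ℝ) : star (exp (-I * θ)) = exp (I * θ) := by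
  simp [← exp_conj]

theorem Complex.exp_neg_I_mul_ofReal_mul_exp_I_mul_ofReal (θ : ℝ) :
    exp (-I * θ) * exp (I * θ) = 1 := by
  rw [← exp_add, neg_mul, neg_add_cancel, exp_zero]

theorem phaseMatrix_mul_mul_conjTranspose (θ : ℝ) (A : Matrix (Fin 2) (Fin 2) ℂ) :
    !![exp (-I * θ), 0; 0, exp (I * θ)] * A * (!![exp (-I * θ), 0; 0, exp (I * θ)])ᴴ
      = !![A 0 0, exp (-I * θ) ^ 2 * A 0 1; exp (I * θ) ^ 2 * A 1 0, A 1 1] := by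
  have hinv := exp_neg_I_mul_ofReal_mul_exp_I_mul_ofReal θ
  rw [Matrix.diag_two_mul_mul_conjTranspose, star_exp_neg_I_mul_ofReal,
    star_exp_I_mul_ofReal]
  ext i j
  fin_cases i <;> fin_cases j <;> simp only [of_apply, cons_val', cons_val_zero, cons_val_one,
    empty_val', cons_val_fin_one, Fin.zero_eta, Fin.mk_one, Fin.isValue]
  · linear_combination A 0 0 * hinv
  · ring
  · ring
  · linear_combination A 1 1 * hinv

theorem exp_neg_I_mul_phase_sq (ω₀ lam t r : ℝ) :
    exp (-I * ((ω₀ / 2 * t - lam / Real.sqrt 2 * r : ℝ) : ℂ)) ^ 2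
      = exp (-I * ω₀ * t) * exp (I * Real.sqrt 2 * lam * r) := by
  have hsqrt : (2 : ℂ) / Real.sqrt 2 = Real.sqrt 2 := by exact_mod_cast Real.div_sqrt
  rw [← exp_nat_mul, ← exp_add]
  congr 1
  push_cast
  linear_combination (I * lam * r) * hsqrt

theorem quasiclassical_energy_conserving_dynamics_general
    (lam ω₀ : ℝ)
    (gt : ℝ → EuclideanSpace ℝ (Fin 3) → ℂ)
    (φ : Lp ℂ 2 (volume : Measure (EuclideanSpace ℝ (Fin 3))) → ℝ → ℝ)
    (hφ : ∀ f t, φ f t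
      = ω₀ / 2 * t - lam / Real.sqrt 2 * (∫ k, (starRingEnd ℂ) (f k) * gt t k).re)
    (U : ℝ → Lp ℂ 2 (volume : Measure (EuclideanSpace ℝ (Fin 3)))
      → Matrix (Fin 2) (Fin 2) ℂ)
    (hU : ∀ t f, U t f
      = !![Complex.exp (-I * (φ f t : ℂ)), 0; 0, Complex.exp (I * (φ f t : ℂ))])
    (μ : Measure (Lp ℂ 2 (volume : Measure (EuclideanSpace ℝ (Fin 3)))))
    [IsProbabilityMeasure μ]
    (γ₀ : Matrix (Fin 2) (Fin 2) ℂ)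
    (γ : ℝ → Matrix (Fin 2) (Fin 2) ℂ)
    (hγ : ∀ t i j, γ t i j = ∫ f, (U t f * γ₀ * (U t f)ᴴ) i j ∂μ) :
    ∀ t : ℝ,
      γ t 0 0 = γ₀ 0 0 ∧ γ t 1 1 = γ₀ 1 1 ∧
      γ t 0 1 = Complex.exp (-I * (ω₀ : ℂ) * (t : ℂ))
        * (∫ f, Complex.exp (I * (Real.sqrt 2 : ℂ) * (lam : ℂ)
            * (((∫ k, (starRingEnd ℂ) (f k) * gt t k).re : ℝ) : ℂ)) ∂μ)
        * γ₀ 0 1 := by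
  intro t
  have hconj (f) : U t f * γ₀ * (U t f)ᴴ
      = !![γ₀ 0 0, exp (-I * ω₀ * t) * exp (I * Real.sqrt 2 * lam
              * (∫ k, (starRingEnd ℂ) (f k) * gt t k).re) * γ₀ 0 1;
          exp (I * φ f t) ^ 2 * γ₀ 1 0, γ₀ 1 1] := by
    rw [hU, phaseMatrix_mul_mul_conjTranspose, hφ, exp_neg_I_mul_phase_sq]
  refine ⟨?_, ?_, ?_⟩ <;> simp only [hγ, hconj, of_apply, cons_val', cons_val_zero, cons_val_one,
    empty_val', cons_val_fin_one]
  · rw [integral_const, probReal_univ, one_smul]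
  · rw [integral_const, probReal_univ, one_smul]
  · rw [integral_mul_const, integral_const_mul]

/-- **Quasi-classical spin dynamics of the energy-conserving spin-boson model.**
With `g_t(k) = (1−e^{iω(k)t}) g(k)/(iω(k))`, `φ_f(t) = (ω₀/2)t − (λ/√2) Re⟨f, g_t⟩`,
`U_t(f) = diag(e^{−iφ_f(t)}, e^{iφ_f(t)})` and `γ(t) = ∫ U_t(f) γ₀ U_t(f)* dμ(f)` (entrywise),
the populations are constant and the coherence is multiplied by `e^{−iω₀ t}` times the
decoherence function `∫ e^{i√2 λ Re⟨f, g_t⟩} dμ(f)`. -/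
theorem quasiclassical_energy_conserving_dynamics
    (ω : EuclideanSpace ℝ (Fin 3) → ℝ) (hω_meas : Measurable ω)
    (hω_pos : ∀ᵐ k : EuclideanSpace ℝ (Fin 3), 0 < ω k)
    (g : EuclideanSpace ℝ (Fin 3) → ℂ)
    (hg : MemLp g 2 (volume : Measure (EuclideanSpace ℝ (Fin 3))))
    (lam ω₀ : ℝ)
    (gt : ℝ → EuclideanSpace ℝ (Fin 3) → ℂ)
    (hgt : ∀ t k, gt t k = (1 - Complex.exp (I * (ω k : ℂ) * (t : ℂ))) * g k / (I * (ω k : ℂ)))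
    (φ : Lp ℂ 2 (volume : Measure (EuclideanSpace ℝ (Fin 3))) → ℝ → ℝ)
    (hφ : ∀ f t, φ f t
      = ω₀ / 2 * t - lam / Real.sqrt 2 * (∫ k, (starRingEnd ℂ) (f k) * gt t k).re)
    (U : ℝ → Lp ℂ 2 (volume : Measure (EuclideanSpace ℝ (Fin 3)))
      → Matrix (Fin 2) (Fin 2) ℂ)
    (hU : ∀ t f, U t f
      = !![Complex.exp (-I * (φ f t : ℂ)), 0; 0, Complex.exp (I * (φ f t : ℂ))])
    (μ : Measure (Lp ℂ 2 (volume : Measure (EuclideanSpace ℝ (Fin 3)))))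
    [IsProbabilityMeasure μ]
    (γ₀ : Matrix (Fin 2) (Fin 2) ℂ)
    (γ : ℝ → Matrix (Fin 2) (Fin 2) ℂ)
    (hγ : ∀ t i j, γ t i j = ∫ f, (U t f * γ₀ * (U t f)ᴴ) i j ∂μ) :
    ∀ t : ℝ,
      γ t 0 0 = γ₀ 0 0 ∧ γ t 1 1 = γ₀ 1 1 ∧
      γ t 0 1 = Complex.exp (-I * (ω₀ : ℂ) * (t : ℂ))
        * (∫ f, Complex.exp (I * (Real.sqrt 2 : ℂ) * (lam : ℂ)
            * (((∫ k, (starRingEnd ℂ) (f k) * gt t k).re : ℝ) : ℂ)) ∂μ)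
        * γ₀ 0 1 :=
  quasiclassical_energy_conserving_dynamics_general lam ω₀ gt φ hφ U hU μ γ₀ γ hγ
end

section
/- Let G be a 2×2 complex Hermitian matrix, λ, ω₀ ∈ ℝ, H_S = (ω₀/2)·σ_z, and let α : ℝ → ℝ be continuous with ∫₀^∞ |α(t)| dt < ∞. Suppose U : ℝ → M₂(ℂ) is continuously differentiable with U(0) = I and U'(t) = −i(H_S + λ·α(t)·G)·U(t) for all t. Then the wave operator Ω₊ := lim_{t → ∞} U(t)* · exp(−it·H_S) exists as a limit in the operator norm on M₂(ℂ). -/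
open MeasureTheory Complex Matrix Filter
open scoped Matrix.Norms.L2Operator

/-!
Cook's method. In the interaction picture `W(t) = U(t)* e^{-itH_S}` the free part of the
generator cancels, leaving `W'(t) = i U(t)* V(t) e^{-itH_S}` with `V(t) = λ α(t) G`. Both `U(t)`
and `e^{-itH_S}` are unitary, so `‖W'(t)‖ = ‖V(t)‖ = |λ α(t)| ‖G‖`, which is integrable on
`(0, ∞)`; hence `W(t) = W(0) + ∫₀ᵗ W'` converges as `t → ∞`.
-/

theorem exists_tendsto_of_hasDerivAt_of_norm_le {E : Type*} [NormedAddCommGroup E]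
    [NormedSpace ℝ E] [CompleteSpace E] {f f' : ℝ → E} {g : ℝ → ℝ} {a : ℝ}
    (hf : ∀ x ∈ Set.Ioi a, HasDerivAt f (f' x) x) (hg : IntegrableOn g (Set.Ioi a))
    (hf'g : ∀ x ∈ Set.Ioi a, ‖f' x‖ ≤ g x) :
    ∃ L, Tendsto f atTop (nhds L) := by
  have hf'_meas : AEStronglyMeasurable f' (volume.restrict (Set.Ioi a)) :=
    (stronglyMeasurable_deriv f).aestronglyMeasurable.congr <|
      ae_restrict_of_forall_mem measurableSet_Ioi fun x hx => (hf x hx).deriv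
  have hf'_int : IntegrableOn f' (Set.Ioi a) :=
    hg.mono' hf'_meas (ae_restrict_of_forall_mem measurableSet_Ioi hf'g)
  exact ⟨_, tendsto_limUnder_of_hasDerivAt_of_integrableOn_Ioi hf hf'_int⟩

namespace Matrix

variable {n : Type*} [Fintype n] [DecidableEq n]

theorem exp_mem_unitary_of_mem_skewAdjoint {A : Matrix n n ℂ}
    (hA : A ∈ skewAdjoint (Matrix n n ℂ)) : NormedSpace.exp A ∈ unitary (Matrix n n ℂ) := by
  rw [Unitary.mem_iff, NormedSpace.star_exp, skewAdjoint.mem_iff.mp hA,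
    ← Matrix.exp_add_of_commute _ _ (Commute.refl A).neg_left,
    ← Matrix.exp_add_of_commute _ _ (Commute.refl A).neg_right,
    neg_add_cancel, add_neg_cancel, NormedSpace.exp_zero, and_self_iff]

theorem IsHermitian.exp_neg_I_mul_smul_mem_unitary {H : Matrix n n ℂ} (hH : H.IsHermitian)
    (t : ℝ) : NormedSpace.exp ((-(I * t)) • H) ∈ unitary (Matrix n n ℂ) := by
  refine exp_mem_unitary_of_mem_skewAdjoint (skewAdjoint.mem_iff.mpr ?_)
  rw [star_smul, hH.star_eq, ← neg_smul]
  congr 1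
  simp

theorem hasDerivAt_exp_neg_I_mul_smul (H : Matrix n n ℂ) (t : ℝ) :
    HasDerivAt (fun s : ℝ => NormedSpace.exp ((-(I * s)) • H))
      (((-I) • H) * NormedSpace.exp ((-(I * t)) • H)) t := by
  have hsmul : ∀ s : ℝ, (-(I * s)) • H = s • ((-I) • H) := fun s => by
    rw [← Complex.coe_smul, smul_smul]
    congr 1
    ring
  simp only [hsmul]
  exact hasDerivAt_exp_smul_const' (𝕂 := ℝ) ((-I) • H) t

theorem mem_unitary_of_hasDerivAt {U K : ℝ → Matrix n n ℂ} (hK : ∀ t, (K t).IsHermitian)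
    (hU0 : U 0 = 1) (hU : ∀ t, HasDerivAt U ((-I) • (K t * U t)) t) (t : ℝ) :
    U t ∈ unitary (Matrix n n ℂ) := by
  have hderiv : ∀ s, HasDerivAt (fun s => star (U s) * U s) 0 s := by
    intro s
    refine ((hU s).star.mul (hU s)).congr_deriv ?_
    rw [star_smul, star_mul, (hK s).star_eq]
    simp [mul_assoc]
  have hconst := is_const_of_deriv_eq_zero (fun s => (hderiv s).differentiableAt)
    (fun s => (hderiv s).deriv) t 0
  exact mem_unitaryGroup_iff'.mpr (by simpa [hU0] using hconst)

theorem exists_tendsto_conjTranspose_mul_exp {H : Matrix n n ℂ} {U V : ℝ → Matrix n n ℂ}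
    (hH : H.IsHermitian) (hV : ∀ t, (V t).IsHermitian)
    (hV_int : IntegrableOn (fun t => ‖V t‖) (Set.Ioi 0)) (hU0 : U 0 = 1)
    (hU : ∀ t, HasDerivAt U ((-I) • ((H + V t) * U t)) t) :
    ∃ Ω, Tendsto (fun t : ℝ => (U t)ᴴ * NormedSpace.exp ((-(I * t)) • H)) atTop (nhds Ω) := by
  set E := fun t : ℝ => NormedSpace.exp ((-(I * t)) • H)
  have hU_unitary : ∀ t, U t ∈ unitary (Matrix n n ℂ) :=
    mem_unitary_of_hasDerivAt (fun t => hH.add (hV t)) hU0 hU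
  have hW : ∀ t, HasDerivAt (fun s => (U s)ᴴ * E s) (I • ((U t)ᴴ * (V t * E t))) t := by
    intro t
    refine ((hU t).star.mul (hasDerivAt_exp_neg_I_mul_smul H t)).congr_deriv ?_
    rw [star_smul, star_mul, (hH.add (hV t)).star_eq]
    simp [E, Matrix.mul_add, Matrix.add_mul, mul_assoc, star_eq_conjTranspose]
  refine exists_tendsto_of_hasDerivAt_of_norm_le (fun t _ => hW t) hV_int fun t _ => ?_
  rw [norm_smul, norm_I, one_mul, ← star_eq_conjTranspose,
    CStarRing.norm_mem_unitary_mul _ (Unitary.star_mem (hU_unitary t)),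
    CStarRing.norm_mul_mem_unitary _ (hH.exp_neg_I_mul_smul_mem_unitary t)]

end Matrix

theorem wave_operator_exists_general
    (G : Matrix (Fin 2) (Fin 2) ℂ) (hG : G.IsHermitian)
    (lam ω₀ : ℝ)
    (HS : Matrix (Fin 2) (Fin 2) ℂ) (hHS : HS = ((ω₀ : ℂ) / 2) • !![1, 0; 0, -1])
    (α : ℝ → ℝ)
    (hα_int : IntegrableOn (fun t => |α t|) (Set.Ioi (0:ℝ)))
    (U : ℝ → Matrix (Fin 2) (Fin 2) ℂ) (hU0 : U 0 = 1)
    (hU : ∀ t : ℝ, HasDerivAt U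
      ((-I) • ((HS + (((lam * α t : ℝ) : ℂ)) • G) * U t)) t) :
    ∃ Ωplus : Matrix (Fin 2) (Fin 2) ℂ,
      Tendsto (fun t : ℝ => (U t)ᴴ * NormedSpace.exp ((-(I * (t : ℂ))) • HS))
        atTop (nhds Ωplus) := by
  have hσz : (!![1, 0; 0, -1] : Matrix (Fin 2) (Fin 2) ℂ).IsHermitian := by
    ext i j
    fin_cases i <;> fin_cases j <;> simp
  have hHS_herm : HS.IsHermitian :=
    hHS ▸ hσz.smul (by simp [IsSelfAdjoint, Complex.conj_ofReal])
  have hV_int : IntegrableOn (fun t => ‖((lam * α t : ℝ) : ℂ) • G‖) (Set.Ioi 0) := by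
    refine IntegrableOn.congr_fun (hα_int.const_mul (|lam| * ‖G‖)) (fun t _ => ?_)
      measurableSet_Ioi
    rw [norm_smul, Complex.norm_real, Real.norm_eq_abs, abs_mul]
    ring
  exact exists_tendsto_conjTranspose_mul_exp hHS_herm
    (fun t => hG.smul (Complex.conj_ofReal _)) hV_int hU0 hU

/-- **Existence of the wave operator `Ω₊` for the quasi-classical spin dynamics.**
If `U'(t) = −i(H_S + λ α(t) G) U(t)`, `U(0) = 1`, with `H_S = (ω₀/2)σ_z`, `G` Hermitian, `α`
continuous and `∫₀^∞ |α(t)| dt < ∞`, then `Ω₊ = lim_{t→∞} U(t)* e^{−itH_S}` exists in the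
operator norm on `M₂(ℂ)`. -/
theorem wave_operator_exists
    (G : Matrix (Fin 2) (Fin 2) ℂ) (hG : G.IsHermitian)
    (lam ω₀ : ℝ)
    (HS : Matrix (Fin 2) (Fin 2) ℂ) (hHS : HS = ((ω₀ : ℂ) / 2) • !![1, 0; 0, -1])
    (α : ℝ → ℝ) (hα : Continuous α)
    (hα_int : IntegrableOn (fun t => |α t|) (Set.Ioi (0:ℝ)))
    (U : ℝ → Matrix (Fin 2) (Fin 2) ℂ) (hU0 : U 0 = 1)
    (hU : ∀ t : ℝ, HasDerivAt U
      ((-I) • ((HS + (((lam * α t : ℝ) : ℂ)) • G) * U t)) t) :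
    ∃ Ωplus : Matrix (Fin 2) (Fin 2) ℂ,
      Tendsto (fun t : ℝ => (U t)ᴴ * NormedSpace.exp ((-(I * (t : ℂ))) • HS))
        atTop (nhds Ωplus) :=
  wave_operator_exists_general G hG lam ω₀ HS hHS α hα_int U hU0 hU
end

section
/- Let G be a 2×2 complex Hermitian matrix, λ, ω₀ ∈ ℝ, H_S = (ω₀/2)·σ_z, and let α : ℝ → ℝ be continuous with ∫₀^∞ |α(t)| dt < ∞ and |λ|·‖G‖·∫₀^∞ |α(t)| dt < 1 (operator norm). Suppose U : ℝ → M₂(ℂ) is continuously differentiable with U(0) = I and U'(t) = −i(H_S + λ·α(t)·G)·U(t) for all t. Then the wave operator Ω₊ = lim_{t → ∞} U(t)* · exp(−it·H_S) exists and is an invertible matrix. -/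
open MeasureTheory Complex Matrix Filter
open scoped Matrix.Norms.L2Operator

open Set NormedSpace Topology

/-!
In the interaction picture `W(t) = U(t)* e^{-itH_S}` the free evolution cancels:
`W'(t) = i λ α(t) U(t)* G e^{-itH_S}`. As `U(t)` and `e^{-itH_S}` are unitary,
`‖W'(t)‖ ≤ |λ| ‖G‖ |α(t)|`, so `W'` is integrable on `(0, ∞)` and `W(t)` converges to some `Ω₊`
with `‖Ω₊ - 1‖ ≤ |λ| ‖G‖ ∫₀^∞ |α| < 1`; the Neumann series then inverts `Ω₊`.
-/

theorem exists_tendsto_norm_sub_le_integral_of_hasDerivAt {E : Type*} [NormedAddCommGroup E]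
    [NormedSpace ℝ E] [CompleteSpace E] {f f' : ℝ → E} {g : ℝ → ℝ} {a : ℝ}
    (hf : ∀ x ∈ Ici a, HasDerivAt f (f' x) x) (hg : IntegrableOn g (Ioi a))
    (hf'g : ∀ x ∈ Ioi a, ‖f' x‖ ≤ g x) :
    ∃ L, Tendsto f atTop (𝓝 L) ∧ ‖L - f a‖ ≤ ∫ x in Ioi a, g x := by
  -- a derivative is always measurable, so the bound by `g` alone makes `f'` integrable
  have hf'_eq : EqOn (deriv f) f' (Ioi a) := fun x hx => (hf x (mem_Ici.2 hx.le)).deriv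
  have hf'_int : IntegrableOn f' (Ioi a) :=
    hg.mono' ((stronglyMeasurable_deriv f).aestronglyMeasurable.congr
      (ae_restrict_of_forall_mem measurableSet_Ioi hf'_eq))
      (ae_restrict_of_forall_mem measurableSet_Ioi hf'g)
  have hlim := tendsto_limUnder_of_hasDerivAt_of_integrableOn_Ioi
    (fun x hx => hf x (mem_Ici.2 hx.le)) hf'_int
  refine ⟨_, hlim, ?_⟩
  rw [← integral_Ioi_of_hasDerivAt_of_tendsto' hf hf'_int hlim]
  exact norm_integral_le_of_norm_le hg (ae_restrict_of_forall_mem measurableSet_Ioi hf'g)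

section CStarAlgebra

variable {A : Type*} [CStarAlgebra A]

theorem norm_le_one_of_star_mul_self_eq_one {x : A} (hx : star x * x = 1) : ‖x‖ ≤ 1 := by
  have h := CStarRing.norm_star_mul_self (x := x)
  rw [hx] at h
  nontriviality A
  rw [norm_one] at h
  nlinarith [norm_nonneg x]

theorem HasDerivAt.star_of_schrodinger {U : ℝ → A} {H : A} {t : ℝ} (hH : IsSelfAdjoint H)
    (hU : HasDerivAt U ((-I) • (H * U t)) t) :
    HasDerivAt (fun s => star (U s)) (I • (star (U t) * H)) t := by
  simpa [star_smul, star_mul, hH.star_eq] using hU.star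

theorem star_mul_self_eq_of_hasDerivAt {U H : ℝ → A} (hH : ∀ t, IsSelfAdjoint (H t))
    (hU : ∀ t, HasDerivAt U ((-I) • (H t * U t)) t) (t : ℝ) :
    star (U t) * U t = star (U 0) * U 0 := by
  have hconst : ∀ t, HasDerivAt (fun s => star (U s) * U s) 0 t := fun t => by
    convert ((hU t).star_of_schrodinger (hH t)).fun_mul (hU t) using 1
    simp only [smul_mul_assoc, mul_smul_comm, neg_smul, mul_neg, mul_assoc, add_neg_cancel]
  exact is_const_of_deriv_eq_zero (fun s => (hconst s).differentiableAt)
    (fun s => (hconst s).deriv) t 0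

theorem hasDerivAt_exp_neg_I_mul_smul (H : A) (t : ℝ) :
    HasDerivAt (fun s : ℝ => exp ((-(I * s)) • H)) (exp ((-(I * t)) • H) * ((-I) • H)) t := by
  have h : ∀ s : ℝ, (-(I * s)) • H = s • ((-I) • H) := fun s => by
    rw [← Complex.coe_smul, smul_smul]
    congr 1
    ring
  simpa only [h] using hasDerivAt_exp_smul_const (𝕂 := ℝ) ((-I) • H) t

theorem exp_neg_I_mul_smul_mem_unitary {H : A} (hH : IsSelfAdjoint H) (t : ℝ) :
    exp ((-(I * t)) • H) ∈ unitary A :=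
  letI : NormedAlgebra ℚ A := .restrictScalars ℚ ℂ A
  exp_mem_unitary_of_mem_skewAdjoint (hH.smul_mem_skewAdjoint (by simp [skewAdjoint.mem_iff]))

theorem hasDerivAt_star_mul_exp {U V : ℝ → A} {H₀ : A} (hH₀ : IsSelfAdjoint H₀)
    (hV : ∀ t, IsSelfAdjoint (V t)) (hU : ∀ t, HasDerivAt U ((-I) • ((H₀ + V t) * U t)) t)
    (t : ℝ) :
    HasDerivAt (fun s : ℝ => star (U s) * exp ((-(I * s)) • H₀))
      (I • (star (U t) * V t * exp ((-(I * t)) • H₀))) t := by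
  have hcomm : Commute H₀ (exp ((-(I * t)) • H₀)) :=
    ((Commute.refl H₀).smul_right _).exp_right
  convert ((hU t).star_of_schrodinger (hH₀.add (hV t))).fun_mul
    (hasDerivAt_exp_neg_I_mul_smul H₀ t) using 1
  generalize exp ((-(I * t)) • H₀) = E at hcomm ⊢
  simp only [mul_smul_comm, smul_mul_assoc, neg_smul, mul_neg, mul_add, add_mul, mul_assoc,
    smul_add, hcomm.eq]
  abel

theorem norm_star_mul_mul_le {u v : A} (hu : star u * u = 1) (hv : star v * v = 1) (x : A) :
    ‖star u * x * v‖ ≤ ‖x‖ :=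
  calc ‖star u * x * v‖ ≤ ‖star u‖ * ‖x‖ * ‖v‖ := norm_mul₃_le
    _ ≤ 1 * ‖x‖ * 1 := by
      rw [norm_star]
      gcongr
      exacts [norm_le_one_of_star_mul_self_eq_one hu, norm_le_one_of_star_mul_self_eq_one hv]
    _ = ‖x‖ := by ring

end CStarAlgebra

theorem wave_operator_exists_and_invertible_general
    (G : Matrix (Fin 2) (Fin 2) ℂ) (hG : G.IsHermitian)
    (lam ω₀ : ℝ)
    (HS : Matrix (Fin 2) (Fin 2) ℂ) (hHS : HS = ((ω₀ : ℂ) / 2) • !![1, 0; 0, -1])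
    (α : ℝ → ℝ)
    (hα_int : IntegrableOn (fun t => |α t|) (Set.Ioi (0:ℝ)))
    (hsmall : |lam| * ‖G‖ * (∫ t in Set.Ioi (0:ℝ), |α t|) < 1)
    (U : ℝ → Matrix (Fin 2) (Fin 2) ℂ) (hU0 : U 0 = 1)
    (hU : ∀ t : ℝ, HasDerivAt U
      ((-I) • ((HS + (((lam * α t : ℝ) : ℂ)) • G) * U t)) t) :
    ∃ Ωplus : Matrix (Fin 2) (Fin 2) ℂ,
      Tendsto (fun t : ℝ => (U t)ᴴ * NormedSpace.exp ((-(I * (t : ℂ))) • HS))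
        atTop (nhds Ωplus) ∧ IsUnit Ωplus := by
  have hHS_sa : IsSelfAdjoint HS := by
    subst hHS
    ext i j
    fin_cases i <;> fin_cases j <;> simp
  have hV : ∀ t, IsSelfAdjoint (((lam * α t : ℝ) : ℂ) • G) := fun t =>
    IsSelfAdjoint.smul (Complex.conj_ofReal _) hG.isSelfAdjoint
  have hUiso : ∀ t, star (U t) * U t = 1 := fun t => by
    rw [star_mul_self_eq_of_hasDerivAt (fun t => hHS_sa.add (hV t)) hU t, hU0, star_one, one_mul]
  have hbound : ∀ t, ‖I • (star (U t) * (((lam * α t : ℝ) : ℂ) • G) *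
      exp ((-(I * t)) • HS))‖ ≤ |lam| * ‖G‖ * |α t| := fun t => by
    rw [norm_smul, norm_I, one_mul]
    refine (norm_star_mul_mul_le (hUiso t) (exp_neg_I_mul_smul_mem_unitary hHS_sa t).1 _).trans ?_
    rw [norm_smul, Complex.norm_real, Real.norm_eq_abs, abs_mul]
    exact le_of_eq (by ring)
  obtain ⟨Ω, hlim, hΩ⟩ := exists_tendsto_norm_sub_le_integral_of_hasDerivAt
    (fun t _ => hasDerivAt_star_mul_exp hHS_sa hV hU t) (hα_int.const_mul (|lam| * ‖G‖))
    (fun t _ => hbound t)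
  refine ⟨Ω, hlim, sub_sub_cancel 1 Ω ▸ isUnit_one_sub_of_norm_lt_one ?_⟩
  calc ‖1 - Ω‖ ≤ ∫ t in Ioi 0, |lam| * ‖G‖ * |α t| := by
        simpa [norm_sub_rev, hU0] using hΩ
    _ = |lam| * ‖G‖ * ∫ t in Ioi 0, |α t| := integral_const_mul _ _
    _ < 1 := hsmall

/-- **Existence and invertibility of the wave operator `Ω₊`.**
If `U'(t) = −i(H_S + λ α(t) G) U(t)`, `U(0) = 1`, with `H_S = (ω₀/2)σ_z`, `G` Hermitian, `α`
continuous, `∫₀^∞ |α(t)| dt < ∞` and `|λ| ‖G‖ ∫₀^∞ |α(t)| dt < 1` (operator norm), then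
`Ω₊ = lim_{t→∞} U(t)* e^{−itH_S}` exists in operator norm and is invertible. -/
theorem wave_operator_exists_and_invertible
    (G : Matrix (Fin 2) (Fin 2) ℂ) (hG : G.IsHermitian)
    (lam ω₀ : ℝ)
    (HS : Matrix (Fin 2) (Fin 2) ℂ) (hHS : HS = ((ω₀ : ℂ) / 2) • !![1, 0; 0, -1])
    (α : ℝ → ℝ) (hα : Continuous α)
    (hα_int : IntegrableOn (fun t => |α t|) (Set.Ioi (0:ℝ)))
    (hsmall : |lam| * ‖G‖ * (∫ t in Set.Ioi (0:ℝ), |α t|) < 1)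
    (U : ℝ → Matrix (Fin 2) (Fin 2) ℂ) (hU0 : U 0 = 1)
    (hU : ∀ t : ℝ, HasDerivAt U
      ((-I) • ((HS + (((lam * α t : ℝ) : ℂ)) • G) * U t)) t) :
    ∃ Ωplus : Matrix (Fin 2) (Fin 2) ℂ,
      Tendsto (fun t : ℝ => (U t)ᴴ * NormedSpace.exp ((-(I * (t : ℂ))) • HS))
        atTop (nhds Ωplus) ∧ IsUnit Ωplus :=
  wave_operator_exists_and_invertible_general G hG lam ω₀ HS hHS α hα_int hsmall U hU0 hU
end

section
/- Let ω : ℝ³ → ℝ be measurable, g ∈ L²(ℝ³,ℂ), λ, ω₀ ∈ ℝ, H_S = (ω₀/2)σ_z, and let G be a 2×2 complex Hermitian matrix. For f ∈ L²(ℝ³,ℂ) set α_t(f) = Re ∫ e^{itω(k)} conj(f(k)) g(k) dk, and suppose for each f there is a continuously differentiable U(f,·) : ℝ → M₂(ℂ) with U(f,0) = I and ∂_t U(f,t) = −i(H_S + λ·α_t(f)·G)·U(f,t). Let μ be a Borel probability measure on L²(ℝ³,ℂ) and let c ≥ 0 be such that ∫₀^∞ |α_t(f)| dt ≤ c for every f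 in the support of μ. Let γ₀ be a 2×2 positive semidefinite matrix of trace 1, assume f ↦ U(f,t) γ₀ U(f,t)* is Bochner integrable with respect to μ for each t, and set γ(t) = ∫ U(f,t) γ₀ U(f,t)* dμ(f). Then for every t ≥ 0, ‖γ(t) − exp(−it H_S) γ₀ exp(it H_S)‖ ≤ 2·c·‖G‖·|λ|, where ‖·‖ is the operator norm on M₂(ℂ). -/
open MeasureTheory Complex Matrix Filter
open scoped Matrix.Norms.L2Operator ComplexOrder

/-- The (topological) support of a measure: points all of whose neighbourhoods have
positive measure. -/
def MeasureTheory.Measure.supp {X : Type*} [TopologicalSpace X] [MeasurableSpace X]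
    (μ : Measure X) : Set X := {x | ∀ V ∈ nhds x, 0 < μ V}

/-!
The free evolution `V t = exp (-i t H_S)` and every `U f` are unitary, their generators being
Hermitian. Differentiating `V(s)* U(f,s)` gives Duhamel's formula
`U(f,t) - V(t) = -i V(t) ∫₀ᵗ V(s)* λ α_s(f) G U(f,s) ds`, hence
`‖U(f,t) - V(t)‖ ≤ |λ| ‖G‖ ∫₀^∞ |α_s(f)| ds ≤ c ‖G‖ |λ|` for `f` in the support of `μ`.
Conjugating `γ₀` (of norm at most `tr γ₀ = 1`) by two unitaries this close moves it by at most
twice that, and averaging over `μ`, which is concentrated on its support, keeps the bound.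
-/

theorem Matrix.PosSemidef.l2_opNorm_le_re_trace {n : Type*} [Fintype n] [DecidableEq n]
    {A : Matrix n n ℂ} (hA : A.PosSemidef) : ‖A‖ ≤ A.trace.re := by
  have hsum : A.trace.re = ∑ i, hA.1.eigenvalues i := by
    simp [hA.1.trace_eq_sum_eigenvalues]
  conv_lhs => rw [hA.1.spectral_theorem]
  rw [Unitary.conjStarAlgAut_apply, ← Unitary.coe_star, CStarRing.norm_mul_coe_unitary,
    CStarRing.norm_coe_unitary_mul, l2_opNorm_diagonal, hsum]
  refine (pi_norm_le_iff_of_nonneg (Finset.sum_nonneg fun i _ => hA.eigenvalues_nonneg i)).2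
    fun i => ?_
  rw [Function.comp_apply, RCLike.norm_ofReal, abs_of_nonneg (hA.eigenvalues_nonneg i)]
  exact Finset.single_le_sum (fun j _ => hA.eigenvalues_nonneg j) (Finset.mem_univ i)

theorem CStarRing.norm_conj_sub_conj_le {E : Type*} [NormedRing E] [StarRing E] [CStarRing E]
    {u v : E} (hu : u ∈ unitary E) (hv : v ∈ unitary E) (a : E) :
    ‖u * a * star u - v * a * star v‖ ≤ 2 * ‖a‖ * ‖u - v‖ := by
  have hsplit : u * a * star u - v * a * star v
      = (u - v) * a * star u + v * (a * star (u - v)) := by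
    simp only [star_sub, sub_mul, mul_sub, mul_assoc]; abel
  have h₁ : ‖(u - v) * a * star u‖ ≤ ‖a‖ * ‖u - v‖ := by
    rw [norm_mul_mem_unitary _ (Unitary.star_mem hu), mul_comm ‖a‖]
    exact norm_mul_le _ _
  have h₂ : ‖v * (a * star (u - v))‖ ≤ ‖a‖ * ‖u - v‖ := by
    rw [norm_mem_unitary_mul _ hv, ← norm_star (u - v)]
    exact norm_mul_le _ _
  calc _ ≤ ‖(u - v) * a * star u‖ + ‖v * (a * star (u - v))‖ := hsplit ▸ norm_add_le _ _
    _ ≤ 2 * ‖a‖ * ‖u - v‖ := by linarith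

theorem Matrix.isHermitian_smul_diag_one_neg_one {z : ℂ} (hz : IsSelfAdjoint z) :
    (z • !![1, 0; 0, -1] : Matrix (Fin 2) (Fin 2) ℂ).IsHermitian := by
  refine IsHermitian.smul ?_ hz
  ext i j
  fin_cases i <;> fin_cases j <;> simp

theorem Matrix.IsHermitian.add_ofReal_smul {n : Type*} {A B : Matrix n n ℂ} (hA : A.IsHermitian)
    (hB : B.IsHermitian) (r : ℝ) : (A + (r : ℂ) • B).IsHermitian :=
  hA.add (hB.smul (conj_ofReal r))

section Propagator

variable {n : Type*} [Fintype n] [DecidableEq n]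

structure IsPropagator (H U : ℝ → Matrix n n ℂ) : Prop where
  map_zero : U 0 = 1
  hasDerivAt : ∀ t, HasDerivAt U ((-I) • (H t * U t)) t

variable {H H' U V : ℝ → Matrix n n ℂ}

theorem IsPropagator.hasDerivAt_star_mul (hU : IsPropagator H U) (hV : IsPropagator H' V)
    (hH' : ∀ t, (H' t).IsHermitian) (t : ℝ) :
    HasDerivAt (fun s => star (V s) * U s) ((-I) • (star (V t) * (H t - H' t) * U t)) t := by
  refine ((hV.hasDerivAt t).star.mul (hU.hasDerivAt t)).congr_deriv ?_
  rw [star_smul, star_mul, star_eq_conjTranspose (H' t), (hH' t).eq]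
  simp only [star_neg, RCLike.star_def, conj_I, neg_neg, mul_sub, sub_mul, smul_sub,
    smul_mul_assoc, mul_smul_comm, mul_assoc]
  module

theorem IsPropagator.mem_unitaryGroup (hU : IsPropagator H U) (hH : ∀ t, (H t).IsHermitian)
    (t : ℝ) : U t ∈ unitaryGroup n ℂ := by
  have hderiv : ∀ s, HasDerivAt (fun s => star (U s) * U s) 0 s := fun s => by
    simpa using hU.hasDerivAt_star_mul hU hH s
  rw [mem_unitaryGroup_iff', is_const_of_deriv_eq_zero (fun s => (hderiv s).differentiableAt)
    (fun s => (hderiv s).deriv) t 0, hU.map_zero, star_one, one_mul]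

theorem isPropagator_exp (H₀ : Matrix n n ℂ) :
    IsPropagator (fun _ => H₀) (fun t => NormedSpace.exp ((-(I * t)) • H₀)) := by
  refine ⟨by simp, fun t => ?_⟩
  have hsmul : ∀ s : ℝ, (-(I * s)) • H₀ = s • ((-I) • H₀) := fun s => by
    rw [← smul_assoc, real_smul]; congr 1; ring
  simp_rw [hsmul]
  exact (hasDerivAt_exp_smul_const' (𝕂 := ℝ) ((-I) • H₀) t).congr_deriv (smul_mul_assoc _ _ _)

theorem IsPropagator.enorm_sub_le_lintegral (hU : IsPropagator H U) (hV : IsPropagator H' V)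
    (hH : ∀ t, (H t).IsHermitian) (hH' : ∀ t, (H' t).IsHermitian) {t : ℝ} (ht : 0 ≤ t) :
    ‖U t - V t‖ₑ ≤ ∫⁻ s in Set.Ioc 0 t, ‖H s - H' s‖ₑ := by
  set D := fun s => (-I) • (star (V s) * (H s - H' s) * U s)
  have hW := hU.hasDerivAt_star_mul hV hH'
  have hD : ∀ s, ‖D s‖ₑ = ‖H s - H' s‖ₑ := fun s => by
    rw [← ofReal_norm, ← ofReal_norm, norm_smul, norm_neg, norm_I, one_mul,
      CStarRing.norm_mul_mem_unitary _ (hU.mem_unitaryGroup hH s),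
      CStarRing.norm_mem_unitary_mul _ (Unitary.star_mem (hV.mem_unitaryGroup hH' s))]
  have hsub : ‖U t - V t‖ₑ = ‖star (V t) * U t - 1‖ₑ := by
    have hVt := hV.mem_unitaryGroup hH' t
    rw [← ofReal_norm, ← ofReal_norm, ← CStarRing.norm_mem_unitary_mul (star (V t) * U t - 1) hVt,
      mul_sub, ← mul_assoc, Unitary.mul_star_self_of_mem hVt, one_mul, mul_one]
  rcases eq_or_ne (∫⁻ s in Set.Ioc 0 t, ‖H s - H' s‖ₑ) ⊤ with hinf | hfin
  · exact hinf ▸ le_top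
  have hDint : IntegrableOn D (Set.Ioc 0 t) := by
    refine ⟨?_, ?_⟩
    -- no measurability of `H` is assumed: `D` is measurable as a derivative
    · rw [show D = deriv (fun s => star (V s) * U s) from funext fun s => (hW s).deriv.symm]
      exact (stronglyMeasurable_deriv _).aestronglyMeasurable
    · simpa only [HasFiniteIntegral, hD] using hfin.lt_top
  have hFTC : ∫ s in (0 : ℝ)..t, D s = star (V t) * U t - 1 := by
    rw [intervalIntegral.integral_eq_sub_of_hasDerivAt (fun s _ => hW s)
      ((intervalIntegrable_iff_integrableOn_Ioc_of_le ht).2 hDint), hU.map_zero, hV.map_zero,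
      star_one, one_mul]
  calc ‖U t - V t‖ₑ = ‖∫ s in Set.Ioc 0 t, D s‖ₑ := by
        rw [hsub, ← hFTC, intervalIntegral.integral_of_le ht]
    _ ≤ ∫⁻ s in Set.Ioc 0 t, ‖D s‖ₑ := enorm_integral_le_lintegral_enorm _
    _ = ∫⁻ s in Set.Ioc 0 t, ‖H s - H' s‖ₑ := by simp only [hD]

theorem IsPropagator.norm_sub_le_of_lintegral_le {H₀ G : Matrix n n ℂ} {a : ℝ → ℝ} {c t : ℝ}
    (hU : IsPropagator (fun s => H₀ + ((a s : ℝ) : ℂ) • G) U) (hV : IsPropagator (fun _ => H₀) V)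
    (hH₀ : H₀.IsHermitian) (hG : G.IsHermitian) (hc0 : 0 ≤ c)
    (hc : ∫⁻ s in Set.Ioi 0, ‖a s‖ₑ ≤ ENNReal.ofReal c) (ht : 0 ≤ t) :
    ‖U t - V t‖ ≤ ‖G‖ * c := by
  have hDuhamel := hU.enorm_sub_le_lintegral hV
    (fun s => hH₀.add_ofReal_smul hG (a s)) (fun _ => hH₀) ht
  have hcoupling : ∫⁻ s in Set.Ioc 0 t, ‖H₀ + ((a s : ℝ) : ℂ) • G - H₀‖ₑ
      ≤ ENNReal.ofReal (‖G‖ * c) := by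
    simp only [add_sub_cancel_left]
    calc ∫⁻ s in Set.Ioc 0 t, ‖((a s : ℝ) : ℂ) • G‖ₑ
        = ∫⁻ s in Set.Ioc 0 t, ‖G‖ₑ * ‖a s‖ₑ := by
          refine lintegral_congr fun s => ?_
          rw [← ofReal_norm, norm_smul, norm_real, ENNReal.ofReal_mul (norm_nonneg _), ofReal_norm,
            ofReal_norm, mul_comm]
      _ = ‖G‖ₑ * ∫⁻ s in Set.Ioc 0 t, ‖a s‖ₑ := lintegral_const_mul' _ _ enorm_ne_top
      _ ≤ ‖G‖ₑ * ENNReal.ofReal c := by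
          gcongr
          exact (lintegral_mono_set Set.Ioc_subset_Ioi_self).trans hc
      _ = ENNReal.ofReal (‖G‖ * c) := by rw [ENNReal.ofReal_mul (norm_nonneg _), ofReal_norm]
  rw [← ofReal_norm] at hDuhamel
  exact (ENNReal.ofReal_le_ofReal_iff (by positivity)).1 (hDuhamel.trans hcoupling)

end Propagator

theorem MeasureTheory.Measure.ae_mem_supp {X : Type*} [TopologicalSpace X] [MeasurableSpace X]
    [HereditarilyLindelofSpace X] (μ : Measure X) : ∀ᵐ x ∂μ, x ∈ μ.supp := by
  have hsupp : μ.supp = μ.support := Set.ext fun x => (Measure.mem_support_iff_forall x).symm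
  exact hsupp ▸ Measure.support_mem_ae

theorem norm_integral_sub_le_of_ae_norm_sub_le {α E : Type*} [MeasurableSpace α]
    [NormedAddCommGroup E] [NormedSpace ℝ E] [CompleteSpace E] {μ : Measure α}
    [IsProbabilityMeasure μ] {F : α → E} (hF : Integrable F μ) (b : E) {C : ℝ}
    (h : ∀ᵐ x ∂μ, ‖F x - b‖ ≤ C) : ‖∫ x, F x ∂μ - b‖ ≤ C := by
  have hbound := norm_integral_le_of_norm_le_const h
  rwa [integral_sub hF (integrable_const b), integral_const, probReal_univ, one_smul, mul_one]
    at hbound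

theorem lintegral_enorm_const_mul_le {α : Type*} [MeasurableSpace α] {μ : Measure α}
    {a : α → ℝ} {c : ℝ} (h : ∫⁻ x, ENNReal.ofReal |a x| ∂μ ≤ ENNReal.ofReal c) (r : ℝ) :
    ∫⁻ x, ‖r * a x‖ₑ ∂μ ≤ ENNReal.ofReal (|r| * c) := by
  simp only [enorm_mul, Real.enorm_eq_ofReal_abs] at h ⊢
  rw [lintegral_const_mul' _ _ ENNReal.ofReal_ne_top, ENNReal.ofReal_mul (abs_nonneg r)]
  gcongr

theorem stability_of_free_dynamics_general
    (lam ω₀ : ℝ)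
    (HS : Matrix (Fin 2) (Fin 2) ℂ) (hHS : HS = ((ω₀ : ℂ) / 2) • !![1, 0; 0, -1])
    (G : Matrix (Fin 2) (Fin 2) ℂ) (hG : G.IsHermitian)
    (α : Lp ℂ 2 (volume : Measure (EuclideanSpace ℝ (Fin 3))) → ℝ → ℝ)
    (U : Lp ℂ 2 (volume : Measure (EuclideanSpace ℝ (Fin 3))) → ℝ
      → Matrix (Fin 2) (Fin 2) ℂ)
    (hU0 : ∀ f, U f 0 = 1)
    (hU : ∀ f t, HasDerivAt (U f)
      ((-I) • ((HS + (((lam * α f t : ℝ) : ℂ)) • G) * U f t)) t)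
    (μ : Measure (Lp ℂ 2 (volume : Measure (EuclideanSpace ℝ (Fin 3)))))
    [IsProbabilityMeasure μ]
    (c : ℝ) (hc0 : 0 ≤ c)
    (hc : ∀ f ∈ μ.supp, (∫⁻ t in Set.Ioi (0:ℝ), ENNReal.ofReal |α f t|) ≤ ENNReal.ofReal c)
    (γ₀ : Matrix (Fin 2) (Fin 2) ℂ) (hγ₀ : γ₀.PosSemidef) (htr : γ₀.trace = 1)
    (hint : ∀ t : ℝ, Integrable (fun f => U f t * γ₀ * (U f t)ᴴ) μ)
    (γ : ℝ → Matrix (Fin 2) (Fin 2) ℂ)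
    (hγ : ∀ t, γ t = ∫ f, U f t * γ₀ * (U f t)ᴴ ∂μ) :
    ∀ t : ℝ, 0 ≤ t →
      ‖γ t - NormedSpace.exp ((-(I * (t : ℂ))) • HS) * γ₀
          * NormedSpace.exp ((I * (t : ℂ)) • HS)‖
        ≤ 2 * c * ‖G‖ * |lam| := by
  intro t ht
  have hHS_herm : HS.IsHermitian :=
    hHS ▸ isHermitian_smul_diag_one_neg_one (by exact_mod_cast conj_ofReal (ω₀ / 2))
  set V := fun s : ℝ => NormedSpace.exp ((-(I * s)) • HS)
  have hV : IsPropagator (fun _ => HS) V := isPropagator_exp HS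
  have hV_star : NormedSpace.exp ((I * t) • HS) = star (V t) := by
    simp [V, NormedSpace.star_exp, star_smul, hHS_herm.isSelfAdjoint.star_eq]
  have hγ₀_norm : ‖γ₀‖ ≤ 1 := by simpa [htr] using hγ₀.l2_opNorm_le_re_trace
  -- makes `Lp ℂ 2` second countable, hence hereditarily Lindelöf
  have : Fact ((2 : ENNReal) ≠ ⊤) := ⟨ENNReal.ofNat_ne_top⟩
  rw [hγ t, hV_star]
  refine norm_integral_sub_le_of_ae_norm_sub_le (hint t) _ (μ.ae_mem_supp.mono fun f hf => ?_)
  have hUf : IsPropagator (fun s => HS + ((lam * α f s : ℝ) : ℂ) • G) (U f) := ⟨hU0 f, hU f⟩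
  have hclose : ‖U f t - V t‖ ≤ ‖G‖ * (|lam| * c) :=
    hUf.norm_sub_le_of_lintegral_le hV hHS_herm hG (by positivity)
      (lintegral_enorm_const_mul_le (hc f hf) lam) ht
  calc ‖U f t * γ₀ * (U f t)ᴴ - V t * γ₀ * star (V t)‖
      ≤ 2 * ‖γ₀‖ * ‖U f t - V t‖ :=
        CStarRing.norm_conj_sub_conj_le
          (hUf.mem_unitaryGroup (fun s => hHS_herm.add_ofReal_smul hG _) t)
          (hV.mem_unitaryGroup (fun _ => hHS_herm) t) γ₀
    _ ≤ 2 * 1 * (‖G‖ * (|lam| * c)) := by gcongr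
    _ = 2 * c * ‖G‖ * |lam| := by ring

/-- **Stability of the free spin dynamics in the quasi-classical limit.**
If for each classical field configuration `f` the unitary `U(f,·)` solves
`∂ₜU(f,t) = −i(H_S + λ α_t(f) G) U(f,t)`, `U(f,0) = 1`, and `∫₀^∞ |α_t(f)| dt ≤ c` for every
`f` in the support of the probability measure `μ`, then the quasi-classical spin state
`γ(t) = ∫ U(f,t) γ₀ U(f,t)* dμ(f)` satisfies
`‖γ(t) − e^{−itH_S} γ₀ e^{itH_S}‖ ≤ 2 c ‖G‖ |λ|` for all `t ≥ 0`. -/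
theorem stability_of_free_dynamics
    (ω : EuclideanSpace ℝ (Fin 3) → ℝ) (hω_meas : Measurable ω)
    (g : EuclideanSpace ℝ (Fin 3) → ℂ)
    (hg : MemLp g 2 (volume : Measure (EuclideanSpace ℝ (Fin 3))))
    (lam ω₀ : ℝ)
    (HS : Matrix (Fin 2) (Fin 2) ℂ) (hHS : HS = ((ω₀ : ℂ) / 2) • !![1, 0; 0, -1])
    (G : Matrix (Fin 2) (Fin 2) ℂ) (hG : G.IsHermitian)
    (α : Lp ℂ 2 (volume : Measure (EuclideanSpace ℝ (Fin 3))) → ℝ → ℝ)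
    (hα : ∀ f t, α f t
      = (∫ k, Complex.exp (I * (t : ℂ) * (ω k : ℂ)) * (starRingEnd ℂ) (f k) * g k).re)
    (U : Lp ℂ 2 (volume : Measure (EuclideanSpace ℝ (Fin 3))) → ℝ
      → Matrix (Fin 2) (Fin 2) ℂ)
    (hU0 : ∀ f, U f 0 = 1)
    (hU : ∀ f t, HasDerivAt (U f)
      ((-I) • ((HS + (((lam * α f t : ℝ) : ℂ)) • G) * U f t)) t)
    (μ : Measure (Lp ℂ 2 (volume : Measure (EuclideanSpace ℝ (Fin 3)))))
    [IsProbabilityMeasure μ]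
    (c : ℝ) (hc0 : 0 ≤ c)
    (hc : ∀ f ∈ μ.supp, (∫⁻ t in Set.Ioi (0:ℝ), ENNReal.ofReal |α f t|) ≤ ENNReal.ofReal c)
    (γ₀ : Matrix (Fin 2) (Fin 2) ℂ) (hγ₀ : γ₀.PosSemidef) (htr : γ₀.trace = 1)
    (hint : ∀ t : ℝ, Integrable (fun f => U f t * γ₀ * (U f t)ᴴ) μ)
    (γ : ℝ → Matrix (Fin 2) (Fin 2) ℂ)
    (hγ : ∀ t, γ t = ∫ f, U f t * γ₀ * (U f t)ᴴ ∂μ) :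
    ∀ t : ℝ, 0 ≤ t →
      ‖γ t - NormedSpace.exp ((-(I * (t : ℂ))) • HS) * γ₀
          * NormedSpace.exp ((I * (t : ℂ)) • HS)‖
        ≤ 2 * c * ‖G‖ * |lam| :=
  stability_of_free_dynamics_general lam ω₀ HS hHS G hG α U hU0 hU μ c hc0 hc γ₀ hγ₀ htr hint γ hγ
end

section
/- Let ω : ℝ³ → ℝ be measurable, g ∈ L²(ℝ³, ℂ), λ, ω₀ ∈ ℝ, and let G be a 2×2 complex matrix with σ_z·G·σ_z = −G (i.e. G is purely off-diagonal). For f ∈ L²(ℝ³,ℂ) set β_t(f) = Re ∫ e^{itω(k)} conj(f(k)) g(k) dk. Let γ₀ be a 2×2 complex matrix and suppose that for every f ∈ L²(ℝ³,ℂ) there is a continuously differentiable γ(f,·) : ℝ → M₂(ℂ) with γ(f,0) = γ₀ and ∂_t γ(f,t) = −i·[(ω₀/2)σ_z + √2·λ·β_t(f)·G , γ(f,t)] (matrix commutator). Let μ be a Borel probability measure on L²(ℝ³,ℂ) invariant under the map f ↦ −f, assume f ↦ γ(f,t) is Bochner integrable with respect to μ for each t, and set γ(t) = ∫ γ(f,t)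 dμ(f). Then: (a) if γ₀ is diagonal (its (1,2) and (2,1) entries vanish), then γ(t) is diagonal for all t ∈ ℝ; (b) if γ₀ is off-diagonal (its (1,1) and (2,2) entries vanish), then γ(t) is off-diagonal for all t ∈ ℝ. -/
/-!
Conjugation by `σ_z` fixes `σ_z`, flips the sign of `G`, and `β_t(-f) = -β_t(f)`, so
`σ_z H(-f, t) σ_z = H(f, t)` for the Hamiltonian `H(f, t) = (ω₀/2) σ_z + √2 λ β_t(f) G`.
Hence `t ↦ ε σ_z γ(-f, t) σ_z` solves the same commutator equation as `γ(f, ·)`, and when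
`ε σ_z γ₀ σ_z = γ₀` it has the same initial value. Since `|β_t(f)| ≤ ∫ |f̄ g|` uniformly in `t`,
the equation is globally Lipschitz and uniqueness gives `γ(f, t) = ε σ_z γ(-f, t) σ_z`.
Averaging over the negation-invariant `μ` yields `ε σ_z γ(t) σ_z = γ(t)`: with `ε = 1` this kills
the off-diagonal entries, with `ε = -1` the diagonal ones.
-/

open MeasureTheory Complex Matrix Filter
open scoped Matrix.Norms.L2Operator

instance : BorelSpace (Lp ℂ 2 (volume : Measure (EuclideanSpace ℝ (Fin 3)))) := ⟨rfl⟩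

section CommutatorEquation

variable {A : Type*} [NormedRing A] [NormedAlgebra ℂ A]

theorem lipschitzWith_commutator (H : A) :
    LipschitzWith (2 * ‖H‖₊) fun X : A => (-I) • (H * X - X * H) := by
  refine LipschitzWith.of_dist_le_mul fun X Y => ?_
  have hdiff : (-I) • (H * X - X * H) - (-I) • (H * Y - Y * H)
      = (-I) • (H * (X - Y) - (X - Y) * H) := by
    rw [← smul_sub]; congr 1; noncomm_ring
  rw [dist_eq_norm, dist_eq_norm, hdiff, norm_smul, norm_neg, norm_I, one_mul]
  calc ‖H * (X - Y) - (X - Y) * H‖ ≤ ‖H‖ * ‖X - Y‖ + ‖X - Y‖ * ‖H‖ :=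
        (norm_sub_le _ _).trans (add_le_add (norm_mul_le _ _) (norm_mul_le _ _))
    _ = (2 * ‖H‖₊ : NNReal) * ‖X - Y‖ := by push_cast; ring

theorem commutator_ODE_solution_unique {H : ℝ → A} {C : NNReal} (hH : ∀ s, ‖H s‖₊ ≤ C) {x y : ℝ → A}
    (hx : ∀ s, HasDerivAt x ((-I) • (H s * x s - x s * H s)) s)
    (hy : ∀ s, HasDerivAt y ((-I) • (H s * y s - y s * H s)) s)
    (h0 : x 0 = y 0) : x = y :=
  ODE_solution_unique_univ (s := fun _ => Set.univ) (t₀ := 0)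
    (fun s => ((lipschitzWith_commutator (H s)).weaken
      (mul_le_mul_of_nonneg_left (hH s) zero_le_two)).lipschitzOnWith)
    (fun s => ⟨hx s, trivial⟩) (fun s => ⟨hy s, trivial⟩) h0

theorem hasDerivAt_smul_conj_of_commutator {S H K : A} (hS : S * S = 1) (hK : S * H * S = K)
    (ε : ℂ) {x : ℝ → A} {s : ℝ} (hx : HasDerivAt x ((-I) • (H * x s - x s * H)) s) :
    HasDerivAt (fun s => ε • (S * x s * S))
      ((-I) • (K * (ε • (S * x s * S)) - ε • (S * x s * S) * K)) s := by
  refine (((hx.const_mul S).mul_const S).const_smul ε).congr_deriv ?_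
  have hconj : ∀ P Q : A, (S * P * S) * (S * Q * S) = S * (P * Q) * S := fun P Q => by
    calc (S * P * S) * (S * Q * S) = S * P * (S * S) * Q * S := by simp only [mul_assoc]
      _ = S * (P * Q) * S := by rw [hS, mul_one, mul_assoc S P Q]
  simp only [← hK, mul_smul_comm, smul_mul_assoc, hconj, mul_sub, sub_mul, smul_sub,
    smul_comm ε (-I)]

end CommutatorEquation

theorem smul_conj_integral_eq_of_odd {G A : Type*} [MeasurableSpace G] [AddGroup G]
    [MeasurableNeg G] {μ : Measure G} [μ.IsNegInvariant] [NormedRing A] [NormedAlgebra ℂ A]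
    {F : G → A} (hF : Integrable F μ) (S : A) (ε : ℂ)
    (hodd : ∀ f, ε • (S * F (-f) * S) = F f) :
    ε • (S * (∫ f, F f ∂μ) * S) = ∫ f, F f ∂μ := by
  have hneg : Integrable (fun f => F (-f)) μ := hF.comp_neg
  calc ε • (S * (∫ f, F f ∂μ) * S) = ε • (S * (∫ f, F (-f) ∂μ) * S) := by
        rw [integral_neg_eq_self]
    _ = ∫ f, ε • (S * F (-f) * S) ∂μ := by
        rw [integral_smul, integral_mul_const_of_integrable (hneg.const_mul S),
          integral_const_mul_of_integrable hneg]
    _ = ∫ f, F f ∂μ := by simp only [hodd]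

theorem norm_integral_exp_mul_le {α : Type*} [MeasurableSpace α] (ν : Measure α) (φ : α → ℝ)
    (t : ℝ) (u v : α → ℂ) :
    ‖∫ k, exp (I * t * φ k) * u k * v k ∂ν‖ ≤ ∫ k, ‖u k * v k‖ ∂ν := by
  refine (norm_integral_le_integral_norm _).trans_eq (integral_congr_ae (.of_forall fun k => ?_))
  simp [mul_assoc, norm_exp]

theorem integral_mul_conj_neg_mul {α : Type*} [MeasurableSpace α] {ν : Measure α}
    {p : ENNReal} (φ g : α → ℂ) (f : Lp ℂ p ν) :
    ∫ k, φ k * starRingEnd ℂ ((-f : Lp ℂ p ν) k) * g k ∂ν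
      = -∫ k, φ k * starRingEnd ℂ (f k) * g k ∂ν := by
  rw [← integral_neg]
  refine integral_congr_ae ?_
  filter_upwards [Lp.coeFn_neg f] with k hk
  rw [hk, Pi.neg_apply, map_neg]
  ring

theorem sigmaZ_conj (X : Matrix (Fin 2) (Fin 2) ℂ) :
    !![1, 0; 0, -1] * X * !![1, 0; 0, -1] = !![X 0 0, -X 0 1; -X 1 0, X 1 1] := by
  rw [X.eta_fin_two]
  simp

theorem sigmaZ_conj_eq_self_iff (X : Matrix (Fin 2) (Fin 2) ℂ) :
    !![1, 0; 0, -1] * X * !![1, 0; 0, -1] = X ↔ X 0 1 = 0 ∧ X 1 0 = 0 := by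
  rw [sigmaZ_conj, ← Matrix.ext_iff]
  simp [Fin.forall_fin_two, neg_eq_self]

theorem neg_sigmaZ_conj_eq_self_iff (X : Matrix (Fin 2) (Fin 2) ℂ) :
    -(!![1, 0; 0, -1] * X * !![1, 0; 0, -1]) = X ↔ X 0 0 = 0 ∧ X 1 1 = 0 := by
  rw [sigmaZ_conj, ← Matrix.ext_iff]
  simp [Fin.forall_fin_two, neg_eq_self]

theorem quasiclassical_diagonal_offdiagonal_decoupling_general
    (ω : EuclideanSpace ℝ (Fin 3) → ℝ)
    (g : EuclideanSpace ℝ (Fin 3) → ℂ)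
    (lam ω₀ : ℝ)
    (σz : Matrix (Fin 2) (Fin 2) ℂ) (hσz : σz = !![1, 0; 0, -1])
    (G : Matrix (Fin 2) (Fin 2) ℂ) (hGoff : σz * G * σz = -G)
    (β : Lp ℂ 2 (volume : Measure (EuclideanSpace ℝ (Fin 3))) → ℝ → ℝ)
    (hβ : ∀ f t, β f t
      = (∫ k, Complex.exp (I * (t : ℂ) * (ω k : ℂ)) * (starRingEnd ℂ) (f k) * g k).re)
    (γ₀ : Matrix (Fin 2) (Fin 2) ℂ)
    (γf : Lp ℂ 2 (volume : Measure (EuclideanSpace ℝ (Fin 3))) → ℝ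
      → Matrix (Fin 2) (Fin 2) ℂ)
    (hγf0 : ∀ f, γf f 0 = γ₀)
    (hγf : ∀ f t, HasDerivAt (γf f)
      ((-I) • ((((ω₀ : ℂ) / 2) • σz + (((Real.sqrt 2 * lam * β f t : ℝ) : ℂ)) • G) * γf f t
        - γf f t * (((ω₀ : ℂ) / 2) • σz + (((Real.sqrt 2 * lam * β f t : ℝ) : ℂ)) • G))) t)
    (μ : Measure (Lp ℂ 2 (volume : Measure (EuclideanSpace ℝ (Fin 3)))))
    (hμinv : Measure.map (fun f => -f) μ = μ)
    (hint : ∀ t : ℝ, Integrable (fun f => γf f t) μ) :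
    ((γ₀ 0 1 = 0 ∧ γ₀ 1 0 = 0) →
      ∀ t : ℝ, (∫ f, γf f t ∂μ) 0 1 = 0 ∧ (∫ f, γf f t ∂μ) 1 0 = 0) ∧
    ((γ₀ 0 0 = 0 ∧ γ₀ 1 1 = 0) →
      ∀ t : ℝ, (∫ f, γf f t ∂μ) 0 0 = 0 ∧ (∫ f, γf f t ∂μ) 1 1 = 0) := by
  have : μ.IsNegInvariant := ⟨hμinv⟩
  set H := fun f t => ((ω₀ : ℂ) / 2) • σz + (((Real.sqrt 2 * lam * β f t : ℝ) : ℂ)) • G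
  have hσz2 : σz * σz = 1 := by
    rw [hσz, Matrix.mul_fin_two, Matrix.one_fin_two]; norm_num
  have hconjH : ∀ f t, σz * H (-f) t * σz = H f t := by
    intro f t
    have hβneg : β (-f) t = -β f t := by
      rw [hβ, hβ, integral_mul_conj_neg_mul, neg_re]
    simp only [H, mul_add, add_mul, Matrix.mul_smul, Matrix.smul_mul, hGoff, hσz2, one_mul, hβneg]
    rw [mul_neg, ofReal_neg, neg_smul, smul_neg, neg_neg]
  have hH_bdd : ∀ f, ∃ C, ∀ t, ‖H f t‖₊ ≤ C := fun f =>
    ⟨‖((ω₀ : ℂ) / 2) • σz‖₊ + ‖Real.sqrt 2 * lam‖₊ * ‖∫ k, ‖(starRingEnd ℂ) (f k) * g k‖‖₊ * ‖G‖₊,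
      fun t => by
        have hβ_le : ‖β f t‖₊ ≤ ‖∫ k, ‖(starRingEnd ℂ) (f k) * g k‖‖₊ := by
          rw [← NNReal.coe_le_coe, coe_nnnorm, coe_nnnorm, hβ]
          exact (abs_re_le_norm _).trans
            ((norm_integral_exp_mul_le _ _ _ _ _).trans (le_abs_self _))
        refine (nnnorm_add_le _ _).trans (add_le_add le_rfl ?_)
        rw [nnnorm_smul, nnnorm_real, nnnorm_mul]
        gcongr⟩
  have hsym : ∀ ε : ℂ, ε • (σz * γ₀ * σz) = γ₀ →
      ∀ t, ε • (σz * (∫ f, γf f t ∂μ) * σz) = ∫ f, γf f t ∂μ := by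
    intro ε hε t
    refine smul_conj_integral_eq_of_odd (hint t) σz ε fun f => ?_
    obtain ⟨C, hC⟩ := hH_bdd f
    refine congrFun (commutator_ODE_solution_unique hC
      (fun s => hasDerivAt_smul_conj_of_commutator hσz2 (hconjH f s) ε (hγf (-f) s))
      (hγf f) ?_) t
    rw [hγf0, hγf0, hε]
  constructor
  · intro hγ₀ t
    have := hsym 1 (by rwa [one_smul, hσz, sigmaZ_conj_eq_self_iff]) t
    rwa [one_smul, hσz, sigmaZ_conj_eq_self_iff] at this
  · intro hγ₀ t
    have := hsym (-1) (by rwa [neg_one_smul, hσz, neg_sigmaZ_conj_eq_self_iff]) t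
    rwa [neg_one_smul, hσz, neg_sigmaZ_conj_eq_self_iff] at this

/-- **Symmetry of the quasi-classical dynamics for off-diagonal couplings.**
If `σ_z G σ_z = −G`, the measure `μ` describing the classical reservoir state is invariant
under `f ↦ −f`, and for every `f` the matrix `γ(f,t)` solves the commutator equation
`∂ₜγ(f,t) = −i[(ω₀/2)σ_z + √2 λ β_t(f) G, γ(f,t)]` with `γ(f,0) = γ₀`, then the averaged
state `γ(t) = ∫ γ(f,t) dμ(f)` stays diagonal if `γ₀` is diagonal, and stays off-diagonal if
`γ₀` is off-diagonal. -/
theorem quasiclassical_diagonal_offdiagonal_decoupling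
    (ω : EuclideanSpace ℝ (Fin 3) → ℝ) (hω_meas : Measurable ω)
    (g : EuclideanSpace ℝ (Fin 3) → ℂ)
    (hg : MemLp g 2 (volume : Measure (EuclideanSpace ℝ (Fin 3))))
    (lam ω₀ : ℝ)
    (σz : Matrix (Fin 2) (Fin 2) ℂ) (hσz : σz = !![1, 0; 0, -1])
    (G : Matrix (Fin 2) (Fin 2) ℂ) (hGoff : σz * G * σz = -G)
    (β : Lp ℂ 2 (volume : Measure (EuclideanSpace ℝ (Fin 3))) → ℝ → ℝ)
    (hβ : ∀ f t, β f t
      = (∫ k, Complex.exp (I * (t : ℂ) * (ω k : ℂ)) * (starRingEnd ℂ) (f k) * g k).re)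
    (γ₀ : Matrix (Fin 2) (Fin 2) ℂ)
    (γf : Lp ℂ 2 (volume : Measure (EuclideanSpace ℝ (Fin 3))) → ℝ
      → Matrix (Fin 2) (Fin 2) ℂ)
    (hγf0 : ∀ f, γf f 0 = γ₀)
    (hγf : ∀ f t, HasDerivAt (γf f)
      ((-I) • ((((ω₀ : ℂ) / 2) • σz + (((Real.sqrt 2 * lam * β f t : ℝ) : ℂ)) • G) * γf f t
        - γf f t * (((ω₀ : ℂ) / 2) • σz + (((Real.sqrt 2 * lam * β f t : ℝ) : ℂ)) • G))) t)
    (hC1 : ∀ f, Continuous (deriv (γf f)))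
    (μ : Measure (Lp ℂ 2 (volume : Measure (EuclideanSpace ℝ (Fin 3)))))
    [IsProbabilityMeasure μ]
    (hμinv : Measure.map (fun f => -f) μ = μ)
    (hint : ∀ t : ℝ, Integrable (fun f => γf f t) μ) :
    ((γ₀ 0 1 = 0 ∧ γ₀ 1 0 = 0) →
      ∀ t : ℝ, (∫ f, γf f t ∂μ) 0 1 = 0 ∧ (∫ f, γf f t ∂μ) 1 0 = 0) ∧
    ((γ₀ 0 0 = 0 ∧ γ₀ 1 1 = 0) →
      ∀ t : ℝ, (∫ f, γf f t ∂μ) 0 0 = 0 ∧ (∫ f, γf f t ∂μ) 1 1 = 0) :=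
  quasiclassical_diagonal_offdiagonal_decoupling_general ω g lam ω₀ σz hσz G hGoff β hβ γ₀ γf hγf0
    hγf μ hμinv hint
end
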